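/- Suppose a nonnegative function E : [1,∞) → [0,∞) satisfies E(R) ≤ C R^β for all R > 1, with β ≤ 2, and suppose a C² function u on ℝⁿ satisfies the Sternberg–Zumbrun inequality ∫(‖∇²u‖² - |∇|∇u||²)φ² ≤ ∫|∇u|²|∇φ|² for all Lipschitz compactly supported φ, where E(R) = ∫_{Q_R(0)} |∇u|². Then ∫_{ℝⁿ}(‖∇²u‖² - |∇|∇u||²) = 0 when β < 2; moreover when β = 2, taking the logarithmic cutoff φ_R equal to 1 on B_{√R}, vanishing outside B_R, φ_R(x) = 2(1 - log|x|/log R) in between, one has ∫|∇u|²|∇φ_R|² ≤ C/ log R → 0, hence again ∫_{ℝⁿ}(‖∇²u‖² - |∇|∇u||²) = 0. -/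

import Mathlib

open MeasureTheory

variable {n : ℕ}

noncomputable def hessEntry (u : EuclideanSpace ℝ (Fin n) → ℝ)
    (x : EuclideanSpace ℝ (Fin n)) (i j : Fin n) : ℝ :=
  fderiv ℝ (fun y => fderiv ℝ u y (EuclideanSpace.single j 1)) x (EuclideanSpace.single i 1)

noncomputable def hessNormSq (u : EuclideanSpace ℝ (Fin n) → ℝ)
    (x : EuclideanSpace ℝ (Fin n)) : ℝ :=
  ∑ i, ∑ j, (hessEntry u x i j) ^ 2

noncomputable def gradNormGradSq (u : EuclideanSpace ℝ (Fin n) → ℝ)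
    (x : EuclideanSpace ℝ (Fin n)) : ℝ :=
  ‖gradient (fun y => ‖gradient u y‖) x‖ ^ 2

noncomputable def lap (u : EuclideanSpace ℝ (Fin n) → ℝ)
    (x : EuclideanSpace ℝ (Fin n)) : ℝ :=
  ∑ i, hessEntry u x i i

open Classical in
noncomputable def SZ (u : EuclideanSpace ℝ (Fin n) → ℝ)
    (x : EuclideanSpace ℝ (Fin n)) : ℝ :=
  hessNormSq u x - (if gradient u x = 0 then 0 else gradNormGradSq u x)

def Qcube (r : ℝ) (x : EuclideanSpace ℝ (Fin n)) : Set (EuclideanSpace ℝ (Fin n)) :=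
  {y | ∀ i, |y i - x i| ≤ r / 2}

def IsStableSolution (f : ℝ → ℝ) (u : EuclideanSpace ℝ (Fin n) → ℝ) : Prop :=
  (∀ x, -lap u x = f (u x)) ∧
  ∀ ψ : EuclideanSpace ℝ (Fin n) → ℝ, ContDiff ℝ (⊤ : ℕ∞) ψ → HasCompactSupport ψ →
    0 ≤ ∫ x, (‖gradient ψ x‖ ^ 2 - deriv f (u x) * ψ x ^ 2)

/- ------------------ auxiliary lemmas ------------------ -/

open Metric Set Filter

section Aux

lemma abs_log_sub_log_le {a b c : ℝ} (hc : 0 < c) (ha : c ≤ a) (hb : c ≤ b) :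
    |Real.log a - Real.log b| ≤ |a - b| / c := by
  wlog hab : b ≤ a generalizing a b
  · rw [abs_sub_comm, abs_sub_comm a b]; exact this hb ha (le_of_not_ge hab)
  have hb0 : 0 < b := hc.trans_le hb
  have ha0 : 0 < a := hc.trans_le ha
  rw [abs_of_nonneg (sub_nonneg.2 (Real.log_le_log hb0 hab)),
    abs_of_nonneg (sub_nonneg.2 hab)]
  rw [← Real.log_div ha0.ne' hb0.ne']
  calc Real.log (a / b) ≤ a / b - 1 := Real.log_le_sub_one_of_pos (div_pos ha0 hb0)
    _ = (a - b) / b := by field_simp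
    _ ≤ (a - b) / c := by gcongr

lemma norm_gradient_eq (f : EuclideanSpace ℝ (Fin n) → ℝ) (x : EuclideanSpace ℝ (Fin n)) :
    ‖gradient f x‖ = ‖fderiv ℝ f x‖ := by
  rw [gradient]
  exact (InnerProductSpace.toDual ℝ _).symm.norm_map _

lemma gradient_eq_zero_of_eventually_const (f : EuclideanSpace ℝ (Fin n) → ℝ)
    {x : EuclideanSpace ℝ (Fin n)}
    {c : ℝ} (h : ∀ᶠ y in nhds x, f y = c) : gradient f x = 0 := by
  have h2 : fderiv ℝ f x = fderiv ℝ (fun _ => c) x :=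
    Filter.EventuallyEq.fderiv_eq h
  rw [gradient, h2, fderiv_fun_const]
  simp

lemma logb_two_pow (K : ℕ) : Real.logb 2 ((2:ℝ) ^ K) = K := by
  rw [Real.logb, Real.log_pow, mul_div_assoc, div_self (ne_of_gt (Real.log_pos one_lt_two)),
    mul_one]

noncomputable def cutF (K : ℕ) (r : ℝ) : ℝ :=
  min 1 (max 0 (2 - Real.logb 2 (max r (2 ^ K)) / K))

lemma cutF_of_le {K : ℕ} (hK : 1 ≤ K) {r : ℝ} (h : r ≤ 2 ^ K) : cutF K r = 1 := by
  rw [cutF, max_eq_right h, logb_two_pow, div_self (by positivity : (K:ℝ) ≠ 0)]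
  norm_num

lemma cutF_of_ge {K : ℕ} (hK : 1 ≤ K) {r : ℝ} (h : 2 ^ (2 * K) ≤ r) : cutF K r = 0 := by
  have hr : max r ((2:ℝ)^K) = r :=
    max_eq_left ((pow_le_pow_right₀ (by norm_num) (by omega)).trans h)
  rw [cutF, hr]
  have hlog : (2*K : ℝ) ≤ Real.logb 2 r := by
    have := logb_two_pow (2*K)
    push_cast at this
    rw [← this]
    exact Real.logb_le_logb_of_le (by norm_num) (by positivity) h
  have h0 : 2 - Real.logb 2 r / K ≤ 0 := by
    rw [sub_nonpos, le_div_iff₀ (by positivity : (0:ℝ) < K)]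
    push_cast at hlog ⊢; linarith
  rw [max_eq_left h0, min_eq_right (by norm_num)]

lemma cutF_nonneg (K : ℕ) (r : ℝ) : 0 ≤ cutF K r :=
  le_min (by norm_num) (le_max_left _ _)

lemma cutF_le_one (K : ℕ) (r : ℝ) : cutF K r ≤ 1 := min_le_left _ _

lemma cutF_lip {K : ℕ} (hK : 1 ≤ K) {a b c : ℝ} (hc : 0 < c)
    (ha : c ≤ max a (2 ^ K)) (hb : c ≤ max b (2 ^ K)) :
    |cutF K a - cutF K b| ≤ |a - b| / (c * (K * Real.log 2)) := by
  have hlog2 : 0 < Real.log 2 := Real.log_pos (by norm_num)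
  have hKpos : (0:ℝ) < K := by positivity
  set Ma := max a ((2:ℝ)^K) with hMa
  set Mb := max b ((2:ℝ)^K) with hMb
  have step1 : |cutF K a - cutF K b| ≤
      |(2 - Real.logb 2 Ma / K) - (2 - Real.logb 2 Mb / K)| := by
    refine (abs_min_sub_min_le_max _ _ _ _).trans ?_
    simp only [sub_self, abs_zero]
    rw [max_eq_right (abs_nonneg _), max_comm (0:ℝ) _, max_comm (0:ℝ) _]
    exact abs_max_sub_max_le_abs _ _ _
  have e1 : (2 - Real.logb 2 Ma / K) - (2 - Real.logb 2 Mb / K)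
      = (Real.log Mb - Real.log Ma) / (K * Real.log 2) := by
    rw [Real.logb, Real.logb]
    ring
  have step2 : |(2 - Real.logb 2 Ma / K) - (2 - Real.logb 2 Mb / K)|
      = |Real.log Ma - Real.log Mb| / (K * Real.log 2) := by
    rw [e1, abs_div, abs_of_pos (mul_pos hKpos hlog2), abs_sub_comm]
  have step3 : |Real.log Ma - Real.log Mb| ≤ |Ma - Mb| / c := abs_log_sub_log_le hc ha hb
  have step4 : |Ma - Mb| ≤ |a - b| := abs_max_sub_max_le_abs _ _ _
  calc |cutF K a - cutF K b| ≤ |Real.log Ma - Real.log Mb| / (K * Real.log 2) :=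
        step2 ▸ step1
    _ ≤ (|a - b| / c) / (K * Real.log 2) := by
        gcongr
        exact step3.trans (by gcongr)
    _ = |a - b| / (c * (K * Real.log 2)) := by field_simp

/- ------------------ Kato's inequality ------------------ -/

lemma hessNormSq_nonneg (u : EuclideanSpace ℝ (Fin n) → ℝ) (x) : 0 ≤ hessNormSq u x :=
  Finset.sum_nonneg fun _ _ => Finset.sum_nonneg fun _ _ => sq_nonneg _

lemma contDiff_gradient {u : EuclideanSpace ℝ (Fin n) → ℝ} (hu : ContDiff ℝ 2 u) :
    ContDiff ℝ 1 (gradient u) := by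
  have h1 : ContDiff ℝ 1 (fderiv ℝ u) := hu.fderiv_right (by norm_num)
  exact ((InnerProductSpace.toDual ℝ (EuclideanSpace ℝ (Fin n))).symm.contDiff).comp h1

lemma gradient_coord (u : EuclideanSpace ℝ (Fin n) → ℝ) (y : EuclideanSpace ℝ (Fin n)) (j : Fin n) :
    gradient u y j = fderiv ℝ u y (EuclideanSpace.single j 1) := by
  have h1 : (inner ℝ (gradient u y) (EuclideanSpace.single j (1:ℝ)) : ℝ)
      = fderiv ℝ u y (EuclideanSpace.single j 1) :=
    InnerProductSpace.toDual_symm_apply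
  rw [← h1, EuclideanSpace.inner_single_right]
  simp

lemma fderiv_gradient_entry {u : EuclideanSpace ℝ (Fin n) → ℝ} (hu : ContDiff ℝ 2 u)
    (x : EuclideanSpace ℝ (Fin n)) (i j : Fin n) :
    fderiv ℝ (gradient u) x (EuclideanSpace.single i 1) j = hessEntry u x i j := by
  have hGdiff : DifferentiableAt ℝ (gradient u) x :=
    ((contDiff_gradient hu).differentiable one_ne_zero) x
  have hproj : HasFDerivAt (fun y => gradient u y j)
      ((EuclideanSpace.proj j).comp (fderiv ℝ (gradient u) x)) x :=
    (EuclideanSpace.proj (𝕜 := ℝ) j).hasFDerivAt.comp x hGdiff.hasFDerivAt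
  have hcoord : (fun y => gradient u y j) = fun y => fderiv ℝ u y (EuclideanSpace.single j 1) :=
    funext fun y => gradient_coord u y j
  rw [hessEntry, ← hcoord, hproj.fderiv]
  rfl

lemma norm_fderiv_gradient_le {u : EuclideanSpace ℝ (Fin n) → ℝ} (hu : ContDiff ℝ 2 u)
    (x : EuclideanSpace ℝ (Fin n)) :
    ‖fderiv ℝ (gradient u) x‖ ≤ Real.sqrt (hessNormSq u x) := by
  set A := fderiv ℝ (gradient u) x with hA
  refine A.opNorm_le_bound (Real.sqrt_nonneg _) (fun v => ?_)
  have hv0 : v = ∑ i, v i • EuclideanSpace.single i (1:ℝ) := by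
    ext j
    rw [WithLp.ofLp_sum, Finset.sum_apply]
    simp [EuclideanSpace.single_apply]
  have hAv : ∀ j, A v j = ∑ i, v i * hessEntry u x i j := by
    intro j
    conv_lhs => rw [hv0]
    rw [map_sum, WithLp.ofLp_sum, Finset.sum_apply]
    congr 1
    funext i
    rw [_root_.map_smul]
    rw [PiLp.smul_apply, fderiv_gradient_entry hu x i j, smul_eq_mul]
  have hnorm : ‖A v‖ ^ 2 = ∑ j, (A v j) ^ 2 := by
    rw [EuclideanSpace.norm_eq, Real.sq_sqrt (Finset.sum_nonneg fun _ _ => sq_nonneg _)]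
    simp [Real.norm_eq_abs, sq_abs]
  have hvnorm : ∑ i, v i ^ 2 = ‖v‖ ^ 2 := by
    rw [EuclideanSpace.norm_eq, Real.sq_sqrt (Finset.sum_nonneg fun _ _ => sq_nonneg _)]
    simp [Real.norm_eq_abs, sq_abs]
  have hsq : ‖A v‖ ^ 2 ≤ hessNormSq u x * ‖v‖ ^ 2 := by
    rw [hnorm]
    calc ∑ j, (A v j) ^ 2 ≤ ∑ j, (∑ i, v i ^ 2) * (∑ i, hessEntry u x i j ^ 2) := by
          refine Finset.sum_le_sum fun j _ => ?_
          rw [hAv j]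
          exact Finset.sum_mul_sq_le_sq_mul_sq _ _ _
      _ = (∑ i, v i ^ 2) * ∑ j, ∑ i, hessEntry u x i j ^ 2 := by rw [← Finset.mul_sum]
      _ = hessNormSq u x * ‖v‖ ^ 2 := by
          rw [hvnorm, hessNormSq, Finset.sum_comm, mul_comm]
  calc ‖A v‖ = Real.sqrt (‖A v‖ ^ 2) := (Real.sqrt_sq (norm_nonneg _)).symm
    _ ≤ Real.sqrt (hessNormSq u x * ‖v‖ ^ 2) := Real.sqrt_le_sqrt hsq
    _ = Real.sqrt (hessNormSq u x) * ‖v‖ := by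
        rw [Real.sqrt_mul (hessNormSq_nonneg u x), Real.sqrt_sq (norm_nonneg _)]

lemma kato {u : EuclideanSpace ℝ (Fin n) → ℝ} (hu : ContDiff ℝ 2 u)
    (x : EuclideanSpace ℝ (Fin n)) :
    gradNormGradSq u x ≤ hessNormSq u x := by
  rw [gradNormGradSq]
  set G := gradient u with hG
  set A := fderiv ℝ G x with hA
  have hGd : Differentiable ℝ G := (contDiff_gradient hu).differentiable one_ne_zero
  have key : ‖fderiv ℝ (fun y => ‖G y‖) x‖ ≤ ‖A‖ := by
    refine le_of_forall_pos_le_add (fun ε hε => ?_)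
    have hc : Continuous fun y => ‖fderiv ℝ G y‖ :=
      ((contDiff_gradient hu).continuous_fderiv one_ne_zero).norm
    have hev : ∀ᶠ y in nhds x, ‖fderiv ℝ G y‖ < ‖A‖ + ε := by
      have : Filter.Tendsto (fun y => ‖fderiv ℝ G y‖) (nhds x) (nhds ‖A‖) := hc.continuousAt
      exact this.eventually_lt_const (lt_add_of_pos_right _ hε)
    obtain ⟨δ, hδpos, hδ⟩ := Metric.eventually_nhds_iff_ball.mp hev
    set L : NNReal := Real.toNNReal (‖A‖ + ε) with hL
    have hlipG : LipschitzOnWith L G (ball x δ) := by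
      refine Convex.lipschitzOnWith_of_nnnorm_fderiv_le (fun y _ => hGd y) ?_ (convex_ball x δ)
      intro y hy
      rw [← NNReal.coe_le_coe, coe_nnnorm, hL, Real.coe_toNNReal _ (by positivity)]
      exact (hδ y hy).le
    have hlipN : LipschitzOnWith (1 * L) (fun y => ‖G y‖) (ball x δ) :=
      lipschitzWith_one_norm.comp_lipschitzOnWith hlipG
    have := norm_fderiv_le_of_lipschitzOn ℝ (ball_mem_nhds x hδpos) hlipN
    calc ‖fderiv ℝ (fun y => ‖G y‖) x‖ ≤ ((1 * L : NNReal) : ℝ) := this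
      _ = ‖A‖ + ε := by rw [one_mul, hL, Real.coe_toNNReal _ (by positivity)]
  have h2 : ‖gradient (fun y => ‖G y‖) x‖ ≤ Real.sqrt (hessNormSq u x) := by
    rw [norm_gradient_eq]
    exact key.trans (norm_fderiv_gradient_le hu x)
  calc ‖gradient (fun y => ‖G y‖) x‖ ^ 2 ≤ Real.sqrt (hessNormSq u x) ^ 2 := by
        have := norm_nonneg (gradient (fun y => ‖G y‖) x)
        nlinarith [Real.sqrt_nonneg (hessNormSq u x)]
    _ = hessNormSq u x := Real.sq_sqrt (hessNormSq_nonneg u x)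

/- ------------------ cutoff function ------------------ -/

noncomputable def phiK (n K : ℕ) : EuclideanSpace ℝ (Fin n) → ℝ := fun x => cutF K ‖x‖

lemma phiK_support {K : ℕ} (hK : 1 ≤ K) {x : EuclideanSpace ℝ (Fin n)}
    (h : (2:ℝ) ^ (2*K) ≤ ‖x‖) : phiK n K x = 0 := cutF_of_ge hK h

lemma phiK_one {K : ℕ} (hK : 1 ≤ K) {x : EuclideanSpace ℝ (Fin n)}
    (h : ‖x‖ ≤ (2:ℝ) ^ K) : phiK n K x = 1 := cutF_of_le hK h

lemma phiK_hasCompactSupport {K : ℕ} (hK : 1 ≤ K) : HasCompactSupport (phiK n K) := by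
  refine HasCompactSupport.intro (isCompact_closedBall (0:EuclideanSpace ℝ (Fin n)) (2^(2*K)))
    (fun x hx => ?_)
  refine phiK_support hK ?_
  simp only [mem_closedBall, dist_zero_right, not_le] at hx
  exact hx.le

lemma phiK_lipschitz {K : ℕ} (hK : 1 ≤ K) :
    LipschitzWith (Real.toNNReal (1 / (2^K * (K * Real.log 2)))) (phiK n K) := by
  have h2K : (0:ℝ) < 2 ^ K := by positivity
  refine LipschitzWith.of_dist_le_mul (fun x y => ?_)
  rw [Real.dist_eq]
  calc |cutF K ‖x‖ - cutF K ‖y‖| ≤ |‖x‖ - ‖y‖| / (2^K * (K * Real.log 2)) :=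
        cutF_lip hK h2K (le_max_right _ _) (le_max_right _ _)
    _ ≤ ‖x - y‖ / (2^K * (K * Real.log 2)) := by
        gcongr
        exact abs_norm_sub_norm_le x y
    _ = Real.toNNReal (1 / (2^K * (K * Real.log 2))) * dist x y := by
        rw [Real.coe_toNNReal _ (by positivity), dist_eq_norm]
        ring

lemma phiK_grad_zero_inner {K : ℕ} (hK : 1 ≤ K) {x : EuclideanSpace ℝ (Fin n)}
    (h : ‖x‖ < 2 ^ K) : gradient (phiK n K) x = 0 := by
  refine gradient_eq_zero_of_eventually_const _ (c := 1) ?_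
  have : Metric.ball x (2^K - ‖x‖) ∈ nhds x := ball_mem_nhds x (by linarith)
  filter_upwards [this] with y hy
  refine cutF_of_le hK ?_
  have : ‖y - x‖ < 2^K - ‖x‖ := by simpa [mem_ball, dist_eq_norm] using hy
  calc ‖y‖ ≤ ‖x‖ + ‖y - x‖ := norm_le_insert' y x
    _ ≤ 2^K := by linarith

lemma phiK_grad_zero_outer {K : ℕ} (hK : 1 ≤ K) {x : EuclideanSpace ℝ (Fin n)}
    (h : (2:ℝ) ^ (2*K) < ‖x‖) : gradient (phiK n K) x = 0 := by
  refine gradient_eq_zero_of_eventually_const _ (c := 0) ?_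
  have : Metric.ball x (‖x‖ - 2^(2*K)) ∈ nhds x := ball_mem_nhds x (by linarith)
  filter_upwards [this] with y hy
  refine cutF_of_ge hK ?_
  have h1 : ‖y - x‖ < ‖x‖ - 2^(2*K) := by simpa [mem_ball, dist_eq_norm] using hy
  have h2 : ‖x‖ - ‖y - x‖ ≤ ‖y‖ := by
    have h4 := norm_le_insert' x y
    have h3 : ‖x - y‖ = ‖y - x‖ := norm_sub_rev x y
    linarith
  linarith

lemma phiK_grad_bound {K : ℕ} (hK : 1 ≤ K) {x : EuclideanSpace ℝ (Fin n)}
    (h : (2:ℝ) ^ K ≤ ‖x‖) :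
    ‖gradient (phiK n K) x‖ ≤ 2 / (‖x‖ * (K * Real.log 2)) := by
  have hx0 : (0:ℝ) < ‖x‖ := lt_of_lt_of_le (by positivity) h
  have hlog2 : 0 < Real.log 2 := Real.log_pos (by norm_num)
  have hKpos : (0:ℝ) < K := by exact_mod_cast Nat.pos_of_ne_zero (by omega)
  set s : Set (EuclideanSpace ℝ (Fin n)) := {y | ‖x‖/2 < ‖y‖} with hs
  have hsopen : IsOpen s := isOpen_lt continuous_const continuous_norm
  have hxs : x ∈ s := by simp only [hs, mem_setOf_eq]; linarith
  have hlip : LipschitzOnWith (Real.toNNReal (2 / (‖x‖ * (K * Real.log 2)))) (phiK n K) s := by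
    rw [lipschitzOnWith_iff_dist_le_mul]
    intro y hy z hz
    rw [Real.dist_eq]
    have hy' : ‖x‖/2 < ‖y‖ := hy
    have hz' : ‖x‖/2 < ‖z‖ := hz
    calc |cutF K ‖y‖ - cutF K ‖z‖| ≤ |‖y‖ - ‖z‖| / ((‖x‖/2) * (K * Real.log 2)) :=
          cutF_lip hK (by positivity) (le_max_of_le_left hy'.le) (le_max_of_le_left hz'.le)
      _ ≤ dist y z / ((‖x‖/2) * (K * Real.log 2)) := by
          gcongr
          rw [dist_eq_norm]; exact abs_norm_sub_norm_le y z
      _ = Real.toNNReal (2 / (‖x‖ * (K * Real.log 2))) * dist y z := by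
          rw [Real.coe_toNNReal _ (by positivity)]
          field_simp
  have := norm_fderiv_le_of_lipschitzOn ℝ (hsopen.mem_nhds hxs) hlip
  rw [norm_gradient_eq]
  exact this.trans_eq (Real.coe_toNNReal _ (by positivity))

/- ------------------ misc ------------------ -/

lemma abs_coord_le_norm (y : EuclideanSpace ℝ (Fin n)) (i : Fin n) : |y i| ≤ ‖y‖ := by
  rw [EuclideanSpace.norm_eq]
  have h1 : |y i| = Real.sqrt (|y i|^2) := (Real.sqrt_sq (abs_nonneg _)).symm
  rw [h1]
  apply Real.sqrt_le_sqrt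
  rw [sq_abs]
  have : (y i)^2 = ‖y i‖^2 := by rw [Real.norm_eq_abs, sq_abs]
  rw [this]
  exact Finset.single_le_sum (fun j _ => sq_nonneg ‖y j‖) (Finset.mem_univ i)

lemma cont_hessNormSq {u : EuclideanSpace ℝ (Fin n) → ℝ} (hu : ContDiff ℝ 2 u) :
    Continuous (hessNormSq u) := by
  refine continuous_finset_sum _ (fun i _ => continuous_finset_sum _ (fun j _ => ?_))
  refine Continuous.pow ?_ 2
  have h1 : ContDiff ℝ 1 (fun y => fderiv ℝ u y (EuclideanSpace.single j 1)) :=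
    (hu.fderiv_right (by norm_num)).clm_apply contDiff_const
  have h2 : Continuous (fderiv ℝ (fun y => fderiv ℝ u y (EuclideanSpace.single j 1))) :=
    h1.continuous_fderiv one_ne_zero
  exact h2.clm_apply continuous_const

end Aux

theorem quadratic_energy_growth_implies_flat
    {n : ℕ} (u : EuclideanSpace ℝ (Fin n) → ℝ) (hu : ContDiff ℝ 2 u)
    (C β : ℝ) (hC : 0 < C) (hβ : β ≤ 2)
    (hgrowth : ∀ R : ℝ, 1 < R →
      (∫ x in Qcube R (0 : EuclideanSpace ℝ (Fin n)), ‖gradient u x‖ ^ 2) ≤ C * R ^ β)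
    (hSZ : ∀ (φ : EuclideanSpace ℝ (Fin n) → ℝ) (K : NNReal), LipschitzWith K φ →
      HasCompactSupport φ →
      ∫ x, SZ u x * φ x ^ 2 ≤ ∫ x, ‖gradient u x‖ ^ 2 * ‖gradient φ x‖ ^ 2) :
    ∫ x, SZ u x = 0 := by
  classical
  have hlog2 : 0 < Real.log 2 := Real.log_pos (by norm_num)
  have hgc : Continuous (gradient u) := (contDiff_gradient hu).continuous
  have hhc : Continuous (hessNormSq u) := cont_hessNormSq hu
  have hSZnn : ∀ x, 0 ≤ SZ u x := by
    intro x
    rw [SZ, sub_nonneg]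
    split
    · exact hessNormSq_nonneg u x
    · exact kato hu x
  have hSZle : ∀ x, SZ u x ≤ hessNormSq u x := by
    intro x
    rw [SZ]
    split
    · simp
    · have : 0 ≤ gradNormGradSq u x := sq_nonneg _
      linarith
  have hSZm : Measurable (SZ u) := by
    have h1 : Measurable (hessNormSq u) := hhc.measurable
    have h2 : Measurable (gradNormGradSq u) := by
      have m1 : Measurable (fderiv ℝ (fun y => ‖gradient u y‖)) :=
        measurable_fderiv ℝ (fun y => ‖gradient u y‖)
      have m2 : Measurable (fun x => gradient (fun y => ‖gradient u y‖) x) :=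
        ((InnerProductSpace.toDual ℝ (EuclideanSpace ℝ (Fin n))).symm.continuous.measurable).comp m1
      exact m2.norm.pow_const 2
    have hset : MeasurableSet {x | gradient u x = 0} :=
      (isClosed_singleton.preimage hgc).measurableSet
    have heq : SZ u = fun x => hessNormSq u x -
        Set.indicator {x | ¬ gradient u x = 0} (gradNormGradSq u) x := by
      funext x
      rw [SZ, Set.indicator_apply]
      by_cases hx : gradient u x = 0
      · rw [if_pos hx, if_neg (by simp [Set.mem_setOf_eq, hx])]
      · rw [if_neg hx, if_pos (by simp [Set.mem_setOf_eq, hx])]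
    rw [heq]
    refine h1.sub (h2.indicator ?_)
    have : {x | ¬ gradient u x = 0} = {x | gradient u x = 0}ᶜ := rfl
    rw [this]
    exact hset.compl
  have hgradsq_cont : Continuous (fun x => ‖gradient u x‖^2) := hgc.norm.pow 2
  -- cubes are compact
  have hQclosed : ∀ r : ℝ, IsClosed (Qcube r (0:EuclideanSpace ℝ (Fin n))) := by
    intro r
    have heq : Qcube r (0:EuclideanSpace ℝ (Fin n))
        = ⋂ i, {y : EuclideanSpace ℝ (Fin n) | |y i - (0:EuclideanSpace ℝ (Fin n)) i| ≤ r/2} := by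
      ext y; simp [Qcube]
    rw [heq]
    refine isClosed_iInter fun i => isClosed_le ?_ continuous_const
    exact (((EuclideanSpace.proj (𝕜 := ℝ) i).continuous).sub continuous_const).abs
  have hQsub : ∀ r : ℝ, Qcube r (0:EuclideanSpace ℝ (Fin n))
      ⊆ Metric.closedBall 0 (Real.sqrt n * (|r|/2)) := by
    intro r y hy
    simp only [Metric.mem_closedBall, dist_zero_right]
    rw [EuclideanSpace.norm_eq]
    have hb : ∀ i, ‖y i‖^2 ≤ (|r|/2)^2 := by
      intro i
      have h1 := hy i
      have h2 : |y i - (0:EuclideanSpace ℝ (Fin n)) i| = |y i| := by simp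
      rw [h2] at h1
      have h3 : |y i| ≤ |r|/2 := h1.trans (by
        have : r / 2 ≤ |r| / 2 := by gcongr; exact le_abs_self r
        linarith)
      calc ‖y i‖^2 = |y i|^2 := by rw [Real.norm_eq_abs]
        _ ≤ (|r|/2)^2 := by gcongr
    calc Real.sqrt (∑ i, ‖y i‖^2) ≤ Real.sqrt (∑ _i : Fin n, (|r|/2)^2) :=
          Real.sqrt_le_sqrt (Finset.sum_le_sum fun i _ => hb i)
      _ = Real.sqrt (n * (|r|/2)^2) := by rw [Finset.sum_const, Finset.card_univ,
            Fintype.card_fin, nsmul_eq_mul]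
      _ = Real.sqrt n * (|r|/2) := by
          rw [Real.sqrt_mul (by positivity), Real.sqrt_sq (by positivity)]
  have hQcompact : ∀ r : ℝ, IsCompact (Qcube r (0:EuclideanSpace ℝ (Fin n))) := fun r =>
    (isCompact_closedBall _ _).of_isClosed_subset (hQclosed r) (hQsub r)
  have hEnergy : ∀ r : ℝ, 1 < r →
      (∫ x in Qcube r (0:EuclideanSpace ℝ (Fin n)), ‖gradient u x‖^2) ≤ C * r^2 := by
    intro r hr
    refine (hgrowth r hr).trans ?_
    have h1 : r ^ β ≤ r ^ (2:ℝ) := Real.rpow_le_rpow_of_exponent_le hr.le hβ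
    have h2 : r ^ (2:ℝ) = r ^ (2:ℕ) := by
      rw [← Real.rpow_natCast r 2]; norm_num
    have := h1.trans_eq h2
    exact mul_le_mul_of_nonneg_left this hC.le
  -- main estimate: for every K ≥ 1 the integral over the ball of radius 2^K is ≤ c₀/K
  set c₀ : ℝ := 64 * C / (Real.log 2)^2 with hc₀
  have hc₀pos : 0 < c₀ := by positivity
  have key : ∀ K : ℕ, 1 ≤ K →
      (∫ x in Metric.closedBall (0:EuclideanSpace ℝ (Fin n)) (2^K), SZ u x) ≤ c₀ / K := by
    intro K hK
    have hKpos : (0:ℝ) < K := by exact_mod_cast Nat.pos_of_ne_zero (by omega)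
    set φ := phiK n K with hφ
    have hφcont : Continuous φ := (phiK_lipschitz hK).continuous
    have hφnn : ∀ x, 0 ≤ φ x := fun x => cutF_nonneg _ _
    have hφle : ∀ x, φ x ≤ 1 := fun x => cutF_le_one _ _
    -- SZ * φ² is integrable
    have hg1 : Integrable (Set.indicator (Metric.closedBall (0:EuclideanSpace ℝ (Fin n))
        (2^(2*K))) (hessNormSq u)) :=
      (integrable_indicator_iff measurableSet_closedBall).2
        ((hhc.continuousOn).integrableOn_compact (isCompact_closedBall _ _))
    have hint : Integrable (fun x => SZ u x * φ x ^ 2) := by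
      refine Integrable.mono' hg1
        ((hSZm.mul ((hφcont.measurable).pow_const 2)).aestronglyMeasurable) ?_
      refine Filter.Eventually.of_forall (fun x => ?_)
      rw [Real.norm_eq_abs, abs_of_nonneg (mul_nonneg (hSZnn x) (sq_nonneg _))]
      by_cases hx : ‖x‖ ≤ 2^(2*K)
      · rw [Set.indicator_of_mem (by simpa [Metric.mem_closedBall, dist_zero_right] using hx)]
        calc SZ u x * φ x ^2 ≤ SZ u x * 1 :=
              mul_le_mul_of_nonneg_left (pow_le_one₀ (hφnn x) (hφle x)) (hSZnn x)
          _ ≤ hessNormSq u x := by rw [mul_one]; exact hSZle x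
      · have hφ0 : φ x = 0 := phiK_support hK (le_of_not_ge hx)
        rw [hφ0]
        refine le_trans (by norm_num) (Set.indicator_nonneg (fun y _ => hessNormSq_nonneg u y) x)
    -- lower bound: integral over ball of radius 2^K
    have hB : (∫ x in Metric.closedBall (0:EuclideanSpace ℝ (Fin n)) (2^K), SZ u x)
        ≤ ∫ x, SZ u x * φ x ^2 := by
      rw [← integral_indicator measurableSet_closedBall]
      refine integral_mono_of_nonneg ?_ hint ?_
      · exact Filter.Eventually.of_forall fun x =>
          Set.indicator_nonneg (fun y _ => hSZnn y) x
      · refine Filter.Eventually.of_forall fun x => ?_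
        by_cases hx : x ∈ Metric.closedBall (0:EuclideanSpace ℝ (Fin n)) (2^K)
        · have hx' : ‖x‖ ≤ 2^K := by
            simpa [Metric.mem_closedBall, dist_zero_right] using hx
          rw [Set.indicator_of_mem hx, hφ]
          show SZ u x ≤ SZ u x * phiK n K x ^ 2
          rw [phiK_one hK hx']
          norm_num
        · rw [Set.indicator_of_notMem hx]
          exact mul_nonneg (hSZnn x) (sq_nonneg _)
    -- stability inequality
    have hB2 : ∫ x, SZ u x * φ x^2 ≤ ∫ x, ‖gradient u x‖^2 * ‖gradient φ x‖^2 :=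
      hSZ φ _ (phiK_lipschitz hK) (phiK_hasCompactSupport hK)
    -- dyadic annuli
    set A : ℕ → Set (EuclideanSpace ℝ (Fin n)) :=
      fun k => {y | (2:ℝ)^k ≤ ‖y‖ ∧ ‖y‖ ≤ 2^(k+1)} with hA
    have hAmeas : ∀ k, MeasurableSet (A k) := by
      intro k
      have heq : A k = (fun y : EuclideanSpace ℝ (Fin n) => ‖y‖) ⁻¹'
          (Set.Icc ((2:ℝ)^k) (2^(k+1))) := by
        ext y; simp [hA, Set.mem_Icc]
      rw [heq]
      exact continuous_norm.measurable measurableSet_Icc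
    have hAsub : ∀ k, A k ⊆ Qcube (2^(k+2)) (0:EuclideanSpace ℝ (Fin n)) := by
      intro k y hy i
      have h1 : |y i - (0:EuclideanSpace ℝ (Fin n)) i| = |y i| := by simp
      rw [h1]
      refine (abs_coord_le_norm y i).trans (hy.2.trans ?_)
      rw [show ((2:ℝ)^(k+2)) = 2^(k+1) * 2 by rw [pow_succ]]
      linarith [pow_pos (by norm_num : (0:ℝ) < 2) (k+1)]
    have hAint : ∀ k, IntegrableOn (fun x => ‖gradient u x‖^2) (A k) := by
      intro k
      exact ((hgradsq_cont.continuousOn).integrableOn_compact (hQcompact (2^(k+2)))).mono_set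
        (hAsub k)
    set ck : ℕ → ℝ := fun k => 4 / ((K * 2^k * Real.log 2)^2) with hck
    have hckpos : ∀ k, 0 < ck k := by
      intro k
      rw [hck]
      positivity
    set g : EuclideanSpace ℝ (Fin n) → ℝ :=
      fun x => ∑ k ∈ Finset.Ico K (2*K),
        Set.indicator (A k) (fun y => ck k * ‖gradient u y‖^2) x with hgdef
    have hgterm_int : ∀ k, Integrable (Set.indicator (A k)
        (fun y => ck k * ‖gradient u y‖^2)) := by
      intro k
      exact (integrable_indicator_iff (hAmeas k)).2 ((hAint k).const_mul _)
    have hgint : Integrable g := integrable_finset_sum _ (fun k _ => hgterm_int k)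
    have hgnn : ∀ x, 0 ≤ g x := by
      intro x
      refine Finset.sum_nonneg fun k _ => Set.indicator_nonneg (fun y _ => ?_) x
      exact mul_nonneg (hckpos k).le (sq_nonneg _)
    -- pointwise bound
    have hpt : ∀ x, ‖gradient u x‖^2 * ‖gradient φ x‖^2 ≤ g x := by
      intro x
      rcases lt_or_ge ‖x‖ (2^K) with hx | hx
      · rw [hφ, phiK_grad_zero_inner hK hx]
        simpa using hgnn x
      rcases lt_or_ge ((2:ℝ)^(2*K)) ‖x‖ with hx2 | hx2
      · rw [hφ, phiK_grad_zero_outer hK hx2]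
        simpa using hgnn x
      -- find the dyadic annulus
      have hx0 : (0:ℝ) < ‖x‖ := lt_of_lt_of_le (by positivity) hx
      set m : ℕ := Nat.floor (Real.logb 2 ‖x‖) with hm
      have hlogK : (K:ℝ) ≤ Real.logb 2 ‖x‖ := by
        rw [← logb_two_pow K]
        exact Real.logb_le_logb_of_le (by norm_num) (by positivity) hx
      have hKm : K ≤ m := Nat.le_floor hlogK
      have hmle : (m:ℝ) ≤ Real.logb 2 ‖x‖ := Nat.floor_le (le_trans (by positivity) hlogK)
      have hmlt : Real.logb 2 ‖x‖ < m + 1 := Nat.lt_floor_add_one _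
      set k : ℕ := min m (2*K - 1) with hkdef
      have hkK : K ≤ k := le_min hKm (by omega)
      have hkmem : k ∈ Finset.Ico K (2*K) := by
        rw [Finset.mem_Ico]
        exact ⟨hkK, by omega⟩
      have hklow : (2:ℝ)^k ≤ ‖x‖ := by
        have h1 : ((2:ℝ))^(k:ℝ) ≤ (2:ℝ)^(Real.logb 2 ‖x‖) := by
          apply Real.rpow_le_rpow_of_exponent_le (by norm_num)
          exact le_trans (by exact_mod_cast Nat.cast_le.2 (min_le_left _ _)) hmle
        rw [Real.rpow_logb (by norm_num) (by norm_num) hx0] at h1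
        rw [← Real.rpow_natCast 2 k]
        exact h1
      have hkhigh : ‖x‖ ≤ (2:ℝ)^(k+1) := by
        rcases le_total m (2*K-1) with hmm | hmm
        · have hk_eq : k = m := min_eq_left hmm
          have h1 : ‖x‖ = (2:ℝ)^(Real.logb 2 ‖x‖) :=
            (Real.rpow_logb (by norm_num) (by norm_num) hx0).symm
          rw [h1, ← Real.rpow_natCast 2 (k+1)]
          apply Real.rpow_le_rpow_of_exponent_le (by norm_num)
          rw [hk_eq]
          push_cast
          linarith
        · have hk_eq : k = 2*K - 1 := min_eq_right hmm
          have : k + 1 = 2*K := by omega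
          rw [this]
          exact hx2
      have hxA : x ∈ A k := ⟨hklow, hkhigh⟩
      -- gradient bound on the annulus
      have hgb : ‖gradient φ x‖ ≤ 2 / ((2:ℝ)^k * (K * Real.log 2)) := by
        have hb := phiK_grad_bound hK hx
        rw [← hφ] at hb
        refine hb.trans ?_
        gcongr
      have hgb2 : ‖gradient φ x‖^2 ≤ ck k := by
        have h1 : ‖gradient φ x‖^2 ≤ (2 / ((2:ℝ)^k * (K * Real.log 2)))^2 :=
          pow_le_pow_left₀ (norm_nonneg _) hgb 2
        refine h1.trans_eq ?_
        have h3 : ((2:ℝ)^k) ≠ 0 := by positivity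
        have h4 : (K:ℝ) ≠ 0 := ne_of_gt hKpos
        have h5 : Real.log 2 ≠ 0 := ne_of_gt hlog2
        rw [hck]
        field_simp
        try ring
      calc ‖gradient u x‖^2 * ‖gradient φ x‖^2 ≤ ‖gradient u x‖^2 * ck k := by
            gcongr
        _ = ck k * ‖gradient u x‖^2 := mul_comm _ _
        _ = Set.indicator (A k) (fun y => ck k * ‖gradient u y‖^2) x :=
            (Set.indicator_of_mem hxA (fun y => ck k * ‖gradient u y‖^2)).symm
        _ ≤ g x := by
            rw [hgdef]
            refine Finset.single_le_sum (f := fun j =>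
              Set.indicator (A j) (fun y => ck j * ‖gradient u y‖^2) x) ?_ hkmem
            intro j _
            exact Set.indicator_nonneg (fun y _ => mul_nonneg (hckpos j).le (sq_nonneg _)) x
    -- integrate the pointwise bound
    have hRHS1 : ∫ x, ‖gradient u x‖^2 * ‖gradient φ x‖^2 ≤ ∫ x, g x :=
      integral_mono_of_nonneg
        (Filter.Eventually.of_forall fun x => mul_nonneg (sq_nonneg _) (sq_nonneg _))
        hgint (Filter.Eventually.of_forall hpt)
    have hgsum : ∫ x, g x = ∑ k ∈ Finset.Ico K (2*K),
        ∫ x in A k, ck k * ‖gradient u x‖^2 := by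
      rw [hgdef, integral_finset_sum _ (fun k _ => hgterm_int k)]
      exact Finset.sum_congr rfl fun k _ => integral_indicator (hAmeas k)
    have hterm : ∀ k ∈ Finset.Ico K (2*K),
        (∫ x in A k, ck k * ‖gradient u x‖^2) ≤ 64*C/((Real.log 2)^2 * K^2) := by
      intro k _
      rw [integral_const_mul]
      have h1 : (∫ x in A k, ‖gradient u x‖^2) ≤ C * ((2:ℝ)^(k+2))^2 := by
        have hmono : (∫ x in A k, ‖gradient u x‖^2)
            ≤ ∫ x in Qcube (2^(k+2)) (0:EuclideanSpace ℝ (Fin n)), ‖gradient u x‖^2 := by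
          refine setIntegral_mono_set
            ((hgradsq_cont.continuousOn).integrableOn_compact (hQcompact (2^(k+2)))) ?_ ?_
          · exact Filter.Eventually.of_forall fun x => sq_nonneg _
          · exact HasSubset.Subset.eventuallyLE (hAsub k)
        refine hmono.trans (hEnergy _ ?_)
        exact one_lt_pow₀ (by norm_num) (by omega)
      have hnn : 0 ≤ ∫ x in A k, ‖gradient u x‖^2 :=
        setIntegral_nonneg (hAmeas k) (fun x _ => sq_nonneg _)
      calc ck k * ∫ x in A k, ‖gradient u x‖^2 ≤ ck k * (C * ((2:ℝ)^(k+2))^2) := by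
            gcongr
        _ = 64*C/((Real.log 2)^2 * K^2) := by
            rw [hck]
            have h2 : ((2:ℝ)^(k+2))^2 = 16 * ((2:ℝ)^k)^2 := by
              rw [pow_add]; ring
            rw [h2]
            have h3 : ((2:ℝ)^k) ≠ 0 := by positivity
            field_simp
            ring
    have hfinal : ∫ x, g x ≤ c₀ / K := by
      rw [hgsum]
      calc ∑ k ∈ Finset.Ico K (2*K), ∫ x in A k, ck k * ‖gradient u x‖^2
          ≤ ∑ k ∈ Finset.Ico K (2*K), 64*C/((Real.log 2)^2 * K^2) :=
            Finset.sum_le_sum hterm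
        _ = (K:ℝ) * (64*C/((Real.log 2)^2 * K^2)) := by
            rw [Finset.sum_const, Nat.card_Ico, nsmul_eq_mul]
            have h6 : 2*K - K = K := by omega
            rw [h6]
        _ = c₀ / K := by
            have h4 : (K:ℝ) ≠ 0 := ne_of_gt hKpos
            have h5 : Real.log 2 ≠ 0 := ne_of_gt hlog2
            rw [hc₀]
            field_simp
            try ring
    calc (∫ x in Metric.closedBall (0:EuclideanSpace ℝ (Fin n)) (2^K), SZ u x)
        ≤ ∫ x, SZ u x * φ x ^2 := hB
      _ ≤ ∫ x, ‖gradient u x‖^2 * ‖gradient φ x‖^2 := hB2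
      _ ≤ ∫ x, g x := hRHS1
      _ ≤ c₀ / K := hfinal
  -- conclude: SZ u vanishes a.e.
  have hball_int : ∀ K : ℕ, IntegrableOn (SZ u)
      (Metric.closedBall (0:EuclideanSpace ℝ (Fin n)) (2^K)) := by
    intro K
    refine Integrable.mono' ((hhc.continuousOn).integrableOn_compact (isCompact_closedBall _ _))
      hSZm.aestronglyMeasurable ?_
    refine Filter.Eventually.of_forall fun x => ?_
    rw [Real.norm_eq_abs, abs_of_nonneg (hSZnn x)]
    exact hSZle x
  have hzero : ∀ M : ℕ, (∫ x in Metric.closedBall (0:EuclideanSpace ℝ (Fin n)) (2^M),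
      SZ u x) = 0 := by
    intro M
    have hnn : 0 ≤ ∫ x in Metric.closedBall (0:EuclideanSpace ℝ (Fin n)) (2^M), SZ u x :=
      setIntegral_nonneg measurableSet_closedBall (fun x _ => hSZnn x)
    refine le_antisymm ?_ hnn
    refine le_of_forall_pos_le_add (fun ε hε => ?_)
    obtain ⟨K, hK1, hKbig⟩ : ∃ K : ℕ, 1 ≤ K ∧ c₀ / K < ε := by
      obtain ⟨K, hK⟩ := exists_nat_gt (max 1 (c₀ / ε))
      refine ⟨K, ?_, ?_⟩
      · have := (le_max_left 1 (c₀/ε)).trans_lt hK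
        exact_mod_cast Nat.one_le_iff_ne_zero.2 (by
          intro h; rw [h] at this; norm_num at this)
      · have hKpos : (0:ℝ) < K := lt_of_le_of_lt (by positivity) ((le_max_left 1 _).trans_lt hK)
        rw [div_lt_iff₀ hKpos]
        have h2 : c₀ / ε < K := (le_max_right 1 _).trans_lt hK
        rw [div_lt_iff₀ hε] at h2
        linarith
    set K' : ℕ := max K M with hK'
    have hsub : Metric.closedBall (0:EuclideanSpace ℝ (Fin n)) (2^M)
        ⊆ Metric.closedBall (0:EuclideanSpace ℝ (Fin n)) (2^K') := by
      apply Metric.closedBall_subset_closedBall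
      exact pow_le_pow_right₀ (by norm_num) (le_max_right K M)
    have hmono : (∫ x in Metric.closedBall (0:EuclideanSpace ℝ (Fin n)) (2^M), SZ u x)
        ≤ ∫ x in Metric.closedBall (0:EuclideanSpace ℝ (Fin n)) (2^K'), SZ u x := by
      refine setIntegral_mono_set (hball_int K') ?_ ?_
      · exact Filter.Eventually.of_forall fun x => hSZnn x
      · exact HasSubset.Subset.eventuallyLE hsub
    have hKK' : c₀ / (K':ℝ) ≤ c₀ / K := by
      refine div_le_div_of_nonneg_left hc₀pos.le ?_ ?_
      · exact_mod_cast Nat.pos_of_ne_zero (by omega)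
      · exact_mod_cast le_max_left K M
    have := (hmono.trans (key K' (le_trans hK1 (le_max_left K M)))).trans hKK'
    linarith
  -- SZ u = 0 a.e.
  have hae : ∀ M : ℕ, SZ u =ᵐ[volume.restrict
      (Metric.closedBall (0:EuclideanSpace ℝ (Fin n)) (2^M))] 0 := by
    intro M
    exact (integral_eq_zero_iff_of_nonneg_ae
      (Filter.Eventually.of_forall fun x => hSZnn x) (hball_int M)).1 (hzero M)
  have haefull : SZ u =ᵐ[(volume : Measure (EuclideanSpace ℝ (Fin n)))] 0 := by
    have hbad : ∀ M : ℕ, volume ({x | SZ u x ≠ 0}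
        ∩ Metric.closedBall (0:EuclideanSpace ℝ (Fin n)) (2^M)) = 0 := by
      intro M
      have h1 := hae M
      rw [Filter.EventuallyEq, ae_iff] at h1
      simp only [Pi.zero_apply] at h1
      rw [Measure.restrict_apply (by exact (hSZm (measurableSet_singleton 0)).compl)] at h1
      exact h1
    have hcover : {x : EuclideanSpace ℝ (Fin n) | SZ u x ≠ 0}
        ⊆ ⋃ M : ℕ, ({x | SZ u x ≠ 0} ∩ Metric.closedBall (0:EuclideanSpace ℝ (Fin n)) (2^M)) := by
      intro x hx
      obtain ⟨M, hM⟩ := pow_unbounded_of_one_lt ‖x‖ (by norm_num : (1:ℝ) < 2)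
      refine Set.mem_iUnion.2 ⟨M, hx, ?_⟩
      simp only [Metric.mem_closedBall, dist_zero_right]
      exact hM.le
    rw [Filter.EventuallyEq, ae_iff]
    refine measure_mono_null hcover (measure_iUnion_null fun M => hbad M)
  calc ∫ x, SZ u x = ∫ x, (0:ℝ) := integral_congr_ae haefull
    _ = 0 := integral_zero _ _
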